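/- arXiv:1912.07399 — 6 statements merged into one kernel-verified Lean document; each statement's English description precedes it below -/
import Mathlib

section
/- Let λ = ((1^a),(1^b)) be a one-column bipartition of d and let T be any standard λ-tableau. Then the permutation w_T ∈ S_d determined by w_T(T^λ(x)) = T(x) for every box x of λ is fully commutative, i.e. no reduced expression of w_T contains a factor s_i s_{i+1} s_i; equivalently, w_T is 321-avoiding. -/
/-- A lattice path of length `d`: starts at the origin, each step adds `(1,0)` or `(0,1)`. -/
def IsLatticePath (d : ℕ) (p : ℕ → ℕ × ℕ) : Prop :=
  p 0 = (0, 0) ∧ ∀ k < d, p (k + 1) = p k + (1, 0) ∨ p (k + 1) = p k + (0, 1)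

/-- The height of a point: `v₁ - v₂ + (κ₂ - κ₁)`. A point lies on `H_{n-1/2}` iff `ht v = n*e`. -/
def ht (κ₁ κ₂ : ℤ) (v : ℕ × ℕ) : ℤ := (v.1 : ℤ) - (v.2 : ℤ) + (κ₂ - κ₁)

/-- Standard tableau of the one-column bipartition `((1^a),(1^b))`:
a bijective filling increasing down each column. -/
def StdTab (a b : ℕ) (T : Fin a ⊕ Fin b → Fin (a + b)) : Prop :=
  Function.Bijective T ∧
    (∀ i j : Fin a, i < j → T (Sum.inl i) < T (Sum.inl j)) ∧
    (∀ i j : Fin b, i < j → T (Sum.inr i) < T (Sum.inr j))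

/-- The lattice path attached to a tableau: at step `k`, record how many entries `≤ k`
(i.e. with value `< k` in the `Fin` model) lie in each column. -/
def pathOf (a b : ℕ) (T : Fin a ⊕ Fin b → Fin (a + b)) : ℕ → ℕ × ℕ :=
  fun k =>
    ((Finset.univ.filter (fun i : Fin a => (T (Sum.inl i) : ℕ) < k)).card,
     (Finset.univ.filter (fun i : Fin b => (T (Sum.inr i) : ℕ) < k)).card)

/-- The initial tableau `T^λ` (0-indexed entries): with `m = min a b`, column 1 gets the even
numbers `≤ 2m` (values `1,3,…,2m-1` in 0-indexing), column 2 the odd numbers `< 2m`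
(values `0,2,…,2m-2`), and the remaining numbers go down the longer column. -/
def initTab (a b : ℕ) : Fin a ⊕ Fin b → Fin (a + b)
  | Sum.inl i =>
      if h : (i : ℕ) < min a b then ⟨2 * i + 1, by have := i.isLt; omega⟩
      else ⟨min a b + i, by have := i.isLt; omega⟩
  | Sum.inr i =>
      if h : (i : ℕ) < min a b then ⟨2 * i, by have := i.isLt; omega⟩
      else ⟨min a b + i, by have := i.isLt; omega⟩

/-- The residue of step `k` of a path, in `ℤ/eℤ`. -/
def res (e : ℕ) (κ₁ κ₂ : ℤ) (p : ℕ → ℕ × ℕ) (k : ℕ) : ZMod e :=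
  if p k = p (k - 1) + (1, 0) then ((κ₁ + 1 - ((p k).1 : ℤ) : ℤ) : ZMod e)
  else ((κ₂ + 1 - ((p k).2 : ℤ) : ℤ) : ZMod e)

/-- The reflection of the path `p` after step `k₀` through the hyperplane of height `n*e`:
agrees with `p` up to `k₀`, and afterwards `v ↦ v - (ht v - n*e)·(1,-1)`. -/
def reflectAfter (κ₁ κ₂ e : ℤ) (n : ℤ) (k₀ : ℕ) (p : ℕ → ℕ × ℕ) : ℕ → ℕ × ℕ :=
  fun k =>
    if k ≤ k₀ then p k
    else ((((p k).1 : ℤ) - (ht κ₁ κ₂ (p k) - n * e)).toNat,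
          (((p k).2 : ℤ) + (ht κ₁ κ₂ (p k) - n * e)).toNat)

/-- The last index `k ≤ d` with `ht (p k) = c` (or `0` if there is none). -/
def lastHit (κ₁ κ₂ : ℤ) (d : ℕ) (p : ℕ → ℕ × ℕ) (c : ℤ) : ℕ :=
  Nat.findGreatest (fun k => ht κ₁ κ₂ (p k) = c) d

/-- The path `p` *last intersects* the hyperplane of height `c`: it meets it, and after that
point it meets no hyperplane (`e ∣ ht`) at all. -/
def LastIntersects (κ₁ κ₂ e : ℤ) (d : ℕ) (p : ℕ → ℕ × ℕ) (c : ℤ) : Prop :=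
  ∃ k ≤ d, ht κ₁ κ₂ (p k) = c ∧ ∀ j ≤ d, k < j → ¬ e ∣ ht κ₁ κ₂ (p j)

open Classical in
/-- The degree of a pair of consecutive points (`u` later, `v` earlier). -/
noncomputable def pairDeg (κ₁ κ₂ e : ℤ) (u v : ℕ × ℕ) : ℤ :=
  if ∃ n : ℤ, ht κ₁ κ₂ u = n * e ∧ |ht κ₁ κ₂ v| < |n * e| then 1
  else if ∃ n : ℤ, ht κ₁ κ₂ v = n * e ∧ |n * e| < |ht κ₁ κ₂ u| then -1
  else 0

/-- The degree of a path: the sum of degrees of its consecutive pairs. -/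
noncomputable def pathDeg (κ₁ κ₂ e : ℤ) (d : ℕ) (p : ℕ → ℕ × ℕ) : ℤ :=
  ∑ k ∈ Finset.range d, pairDeg κ₁ κ₂ e (p (k + 1)) (p k)


lemma initTab_inl_mono (a b : ℕ) :
    StrictMono (fun i : Fin a => initTab a b (Sum.inl i)) := by
  intro i j hij
  have hij' : (i : ℕ) < j := hij
  have hi := i.isLt; have hj := j.isLt
  simp only [initTab]
  split_ifs <;> simp only [Fin.mk_lt_mk] <;> omega

lemma initTab_inr_mono (a b : ℕ) :
    StrictMono (fun i : Fin b => initTab a b (Sum.inr i)) := by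
  intro i j hij
  have hij' : (i : ℕ) < j := hij
  have hi := i.isLt; have hj := j.isLt
  simp only [initTab]
  split_ifs <;> simp only [Fin.mk_lt_mk] <;> omega

/-- For any standard tableau `T` of a one-column bipartition, the permutation `w_T` with
`w_T (T^λ x) = T x` is 321-avoiding (equivalently, fully commutative). -/
theorem stmt1 (a b : ℕ) (T : Fin a ⊕ Fin b → Fin (a + b)) (hT : StdTab a b T)
    (w : Equiv.Perm (Fin (a + b))) (hw : ∀ x, w (initTab a b x) = T x) :
    ¬ ∃ i j k : Fin (a + b), i < j ∧ j < k ∧ w k < w j ∧ w j < w i := by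
  rintro ⟨i, j, k, hij, hjk, h1, h2⟩
  obtain ⟨hbij, hcol1, hcol2⟩ := hT
  have hinit : Function.Bijective (initTab a b) := by
    have heq : initTab a b = (w.symm : Fin (a+b) → Fin (a+b)) ∘ T := by
      funext x
      simp [Function.comp, ← hw x]
    rw [heq]
    exact w.symm.bijective.comp hbij
  obtain ⟨x, hx⟩ := hinit.surjective i
  obtain ⟨y, hy⟩ := hinit.surjective j
  obtain ⟨z, hz⟩ := hinit.surjective k
  have keyl : ∀ u v : Fin a, initTab a b (Sum.inl u) < initTab a b (Sum.inl v) →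
      T (Sum.inl u) < T (Sum.inl v) := fun u v h =>
    hcol1 u v ((initTab_inl_mono a b).lt_iff_lt.mp h)
  have keyr : ∀ u v : Fin b, initTab a b (Sum.inr u) < initTab a b (Sum.inr v) →
      T (Sum.inr u) < T (Sum.inr v) := fun u v h =>
    hcol2 u v ((initTab_inr_mono a b).lt_iff_lt.mp h)
  have hTx : w i = T x := by rw [← hx, hw]
  have hTy : w j = T y := by rw [← hy, hw]
  have hTz : w k = T z := by rw [← hz, hw]
  rw [hTx, hTy] at h2
  rw [hTy, hTz] at h1
  rw [← hx, ← hy] at hij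
  rw [← hy, ← hz] at hjk
  rcases x with x | x <;> rcases y with y | y <;> rcases z with z | z
  · exact absurd (keyl x y hij) (not_lt.mpr h2.le)
  · exact absurd (keyl x y hij) (not_lt.mpr h2.le)
  · exact absurd (keyl x z (hij.trans hjk)) (not_lt.mpr (h1.trans h2).le)
  · exact absurd (keyr y z hjk) (not_lt.mpr h1.le)
  · exact absurd (keyl y z hjk) (not_lt.mpr h1.le)
  · exact absurd (keyr x z (hij.trans hjk)) (not_lt.mpr (h1.trans h2).le)
  · exact absurd (keyr x y hij) (not_lt.mpr h2.le)
  · exact absurd (keyr x y hij) (not_lt.mpr h2.le)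
end

section
/- Let λ = ((1^a),(1^b)) be a one-column bipartition of d and T^λ its initial tableau. Then T^λ is maximal among all standard λ-tableaux for the order ⪯: for every standard λ-tableau S and every 1 ≤ k ≤ d, one has |a_k(S) − b_k(S)| ≥ |a_k(T^λ) − b_k(T^λ)|, where a_k(·), b_k(·) denote the numbers of entries ≤ k in the first and second columns respectively. -/

private lemma stmt2_cardlt (n t : ℕ) :
    (Finset.univ.filter (fun i : Fin n => (i:ℕ) < t)).card = min n t := by
  calc (Finset.univ.filter (fun i : Fin n => (i:ℕ) < t)).card
      = (((Finset.univ : Finset (Fin n)).map Fin.valEmbedding).filter (· < t)).card := by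
        rw [Finset.filter_map, Finset.card_map]; rfl
    _ = ((Finset.Iio n).filter (· < t)).card := by rw [Fin.map_valEmbedding_univ]
    _ = (Finset.Iio (min n t)).card := by rw [Finset.Iio_filter_lt]
    _ = min n t := by simp

private lemma stmt2_sumcard (a b k : ℕ) (hk : k ≤ a + b) (S : Fin a ⊕ Fin b → Fin (a + b))
    (hS : Function.Bijective S) :
    (Finset.univ.filter (fun i : Fin a => (S (Sum.inl i) : ℕ) < k)).card +
      (Finset.univ.filter (fun i : Fin b => (S (Sum.inr i) : ℕ) < k)).card = k := by
  set u := (Finset.univ.filter (fun y : Fin a ⊕ Fin b => (S y : ℕ) < k)) with hu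
  have h1 : u.toLeft = Finset.univ.filter (fun i : Fin a => (S (Sum.inl i) : ℕ) < k) := by
    ext x; simp [hu]
  have h2 : u.toRight = Finset.univ.filter (fun i : Fin b => (S (Sum.inr i) : ℕ) < k) := by
    ext x; simp [hu]
  rw [← h1, ← h2, Finset.card_toLeft_add_card_toRight]
  have hc : u.card = (Finset.univ.filter (fun v : Fin (a+b) => (v:ℕ) < k)).card := by
    apply Finset.card_bij (fun y _ => S y)
    · intro y hy; simp [hu] at hy ⊢; exact hy
    · intro y1 _ y2 _ h; exact hS.1 h
    · intro v hv
      obtain ⟨y, hy⟩ := hS.2 v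
      refine ⟨y, ?_, hy⟩
      simp [hu, hy]
      simpa using hv
  rw [hc, stmt2_cardlt]
  omega

private lemma stmt2_initL (a b k : ℕ) :
    (Finset.univ.filter (fun i : Fin a => (initTab a b (Sum.inl i) : ℕ) < k)).card
      = min a (if k ≤ 2 * min a b then k / 2 else k - min a b) := by
  rw [show (Finset.univ.filter (fun i : Fin a => (initTab a b (Sum.inl i) : ℕ) < k))
      = Finset.univ.filter (fun i : Fin a =>
          (i:ℕ) < (if k ≤ 2 * min a b then k / 2 else k - min a b)) from ?_, stmt2_cardlt]
  apply Finset.filter_congr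
  intro i _
  have hi := i.isLt
  simp only [initTab]
  split_ifs with h h2 h2 <;> simp <;> omega

private lemma stmt2_initR (a b k : ℕ) :
    (Finset.univ.filter (fun i : Fin b => (initTab a b (Sum.inr i) : ℕ) < k)).card
      = min b (if k ≤ 2 * min a b then (k + 1) / 2 else k - min a b) := by
  rw [show (Finset.univ.filter (fun i : Fin b => (initTab a b (Sum.inr i) : ℕ) < k))
      = Finset.univ.filter (fun i : Fin b =>
          (i:ℕ) < (if k ≤ 2 * min a b then (k + 1) / 2 else k - min a b)) from ?_, stmt2_cardlt]
  apply Finset.filter_congr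
  intro i _
  have hi := i.isLt
  simp only [initTab]
  split_ifs with h h2 h2 <;> simp <;> omega

private lemma stmt2_key (a b k A B A' B' : ℕ) (hk1 : 1 ≤ k) (hk2 : k ≤ a + b)
    (hA : A = min a (if k ≤ 2 * min a b then k / 2 else k - min a b))
    (hB : B = min b (if k ≤ 2 * min a b then (k + 1) / 2 else k - min a b))
    (hs : A' + B' = k) (ha : A' ≤ a) (hb : B' ≤ b) :
    |(A:ℤ) - B| ≤ |(A':ℤ) - B'| := by
  rcases abs_cases ((A:ℤ) - B) with ⟨h1, _⟩ | ⟨h1, _⟩ <;>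
    rcases abs_cases ((A':ℤ) - B') with ⟨h2, _⟩ | ⟨h2, _⟩ <;>
      rw [h1, h2] <;> split_ifs at hA hB <;> omega

/-- The initial tableau `T^λ` is maximal for the order `⪯`: for every standard tableau `S`
and every `1 ≤ k ≤ d`, `|a_k(S) − b_k(S)| ≥ |a_k(T^λ) − b_k(T^λ)|`. -/
theorem stmt2 (a b : ℕ) (S : Fin a ⊕ Fin b → Fin (a + b)) (hS : StdTab a b S)
    (k : ℕ) (hk1 : 1 ≤ k) (hk2 : k ≤ a + b) :
    |((pathOf a b (initTab a b) k).1 : ℤ) - ((pathOf a b (initTab a b) k).2 : ℤ)| ≤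
      |((pathOf a b S k).1 : ℤ) - ((pathOf a b S k).2 : ℤ)| := by
  have hsum := stmt2_sumcard a b k hk2 S hS.1
  have hAle : (pathOf a b S k).1 ≤ a := by
    simp only [pathOf]; exact le_trans (Finset.card_filter_le _ _) (by simp)
  have hBle : (pathOf a b S k).2 ≤ b := by
    simp only [pathOf]; exact le_trans (Finset.card_filter_le _ _) (by simp)
  exact stmt2_key a b k _ _ _ _ hk1 hk2 (stmt2_initL a b k) (stmt2_initR a b k)
    hsum hAle hBle
end

section
/- Fix integers e ≥ 2 and a bicharge (κ₁,κ₂) ∈ ℤ² with 0 < κ₂ − κ₁ < e. Let p be a lattice path of length d, suppose h(p(a)) = m·e for some 1 ≤ a ≤ d−1 and m ∈ ℤ (i.e. p meets the hyperplane H_{m−1/2} at step a), and define the reflected path q by q(k) = p(k) for k ≤ a and q(k) = p(k) − (h(p(k)) − m·e)·(1,−1) for k > a. Then q is again a lattice path of length d (each increment lies in {(1,0),(0,1)}), and the residue sequences of p and q are equal: res(p)(k) = res(q)(k) for all 1 ≤ k ≤ d. -/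
/-- Reflecting a lattice path after an intersection with a hyperplane yields again a lattice
path, with the same residue sequence. -/
theorem stmt3 (e : ℕ) (he : 2 ≤ e) (κ₁ κ₂ : ℤ) (hκ : 0 < κ₂ - κ₁) (hκe : κ₂ - κ₁ < (e : ℤ))
    (d : ℕ) (p : ℕ → ℕ × ℕ) (hp : IsLatticePath d p)
    (a : ℕ) (ha1 : 1 ≤ a) (ha2 : a ≤ d - 1) (m : ℤ)
    (hwall : ht κ₁ κ₂ (p a) = m * (e : ℤ)) :
    IsLatticePath d (reflectAfter κ₁ κ₂ (e : ℤ) m a p) ∧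
      ∀ k, 1 ≤ k → k ≤ d →
        res e κ₁ κ₂ p k = res e κ₁ κ₂ (reflectAfter κ₁ κ₂ (e : ℤ) m a p) k := by

  obtain ⟨h0, hstep⟩ := hp
  have had : a < d := by omega
  set q := reflectAfter κ₁ κ₂ (e : ℤ) m a p with hq
  have hw : m * (e : ℤ) = ((p a).1 : ℤ) - (p a).2 + (κ₂ - κ₁) := by
    rw [ht] at hwall; omega
  -- monotonicity of the path after step a
  have mono : ∀ k, a ≤ k → k ≤ d → (p a).1 ≤ (p k).1 ∧ (p a).2 ≤ (p k).2 := by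
    intro k
    induction k with
    | zero => intro h1 _; have : a = 0 := by omega
              simp [this]
    | succ n ih =>
      intro h1 h2
      rcases Nat.lt_or_ge n a with h | h
      · have : a = n + 1 := by omega
        simp [this]
      · obtain ⟨m1, m2⟩ := ih h (by omega)
        rcases hstep n (by omega) with hs | hs <;> rw [hs] <;>
          simp [Prod.fst_add, Prod.snd_add] <;> omega
  -- explicit formula for q on [a, d]
  have qval : ∀ k, a ≤ k → k ≤ d →
      q k = ((p k).2 + (p a).1 - (p a).2, (p k).1 + (p a).2 - (p a).1) := by
    intro k hk1 hk2
    obtain ⟨m1, m2⟩ := mono k hk1 hk2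
    rcases Nat.eq_or_lt_of_le hk1 with h | h
    · subst h
      simp only [hq, reflectAfter, if_pos (le_refl a)]
      ext <;> simp <;> omega
    · simp only [hq, reflectAfter, if_neg (by omega : ¬ k ≤ a), ht]
      ext <;> simp [hw] <;> omega
  have qeq : ∀ k, k ≤ a → q k = p k := by
    intro k hk; simp only [hq, reflectAfter, if_pos hk]
  constructor
  · constructor
    · rw [qeq 0 (by omega), h0]
    · intro k hk
      rcases Nat.lt_or_ge k a with h | h
      · rw [qeq k (by omega), qeq (k+1) (by omega)]; exact hstep k hk
      · rw [qval k h (by omega), qval (k+1) (by omega) (by omega)]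
        obtain ⟨m1, m2⟩ := mono k h (by omega)
        rcases hstep k hk with hs | hs <;> rw [hs]
        · right; ext <;> simp <;> omega
        · left; ext <;> simp <;> omega
  · intro k hk1 hkd
    rcases le_or_gt k a with h | h
    · unfold res
      rw [qeq k h, qeq (k-1) (by omega)]
    · -- k > a
      obtain ⟨m1, m2⟩ := mono (k-1) (by omega) (by omega)
      have hstepk := hstep (k-1) (by omega)
      rw [Nat.sub_add_cancel hk1] at hstepk
      have hq1 := qval (k-1) (by omega) (by omega)
      have hq2 := qval k (by omega) hkd
      have hze : ((m * (e : ℤ) : ℤ) : ZMod e) = 0 := by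
        push_cast; simp [ZMod.natCast_self]
      rcases hstepk with hs | hs
      · have hcondp : p k = p (k-1) + (1, 0) := hs
        have hpk1 : (p k).1 = (p (k-1)).1 + 1 := by rw [hs]; simp
        have hpk2 : (p k).2 = (p (k-1)).2 := by rw [hs]; simp
        have hqstep : q k = q (k-1) + (0, 1) := by
          rw [hq1, hq2]; ext <;> simp <;> omega
        have hqne : ¬ q k = q (k-1) + (1, 0) := by
          rw [hqstep]; intro hcon
          have := congrArg Prod.fst hcon
          simp at this
        unfold res
        rw [if_pos hcondp, if_neg hqne]
        have hv : (κ₂ + 1 - ((q k).2 : ℤ)) = (κ₁ + 1 - ((p k).1 : ℤ)) + m * (e : ℤ) := by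
          rw [hq2]; simp only; rw [hw]; push_cast; omega
        rw [hv]; push_cast [ZMod.natCast_self]; ring
      · have hpk1 : (p k).1 = (p (k-1)).1 := by rw [hs]; simp
        have hpk2 : (p k).2 = (p (k-1)).2 + 1 := by rw [hs]; simp
        have hcondp : ¬ p k = p (k-1) + (1, 0) := by
          intro hcon
          have := congrArg Prod.fst hcon
          simp at this; omega
        have hqstep : q k = q (k-1) + (1, 0) := by
          rw [hq1, hq2]; ext <;> simp <;> omega
        unfold res
        rw [if_neg hcondp, if_pos hqstep]
        have hv : (κ₁ + 1 - ((q k).1 : ℤ)) = (κ₂ + 1 - ((p k).2 : ℤ)) - m * (e : ℤ) := by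
          rw [hq2]; simp only; rw [hw]; push_cast; omega
        rw [hv]; push_cast [ZMod.natCast_self]; ring
end

section
/- Fix e ≥ 2 and a bicharge (κ₁,κ₂) with 0 < κ₂ − κ₁ < e. Let (a,b) and (a′,b′) be one-column bipartitions of the same d (a+b = a′+b′ = d). Then the multiset of residues {κ₁ mod e, κ₁−1 mod e, …, κ₁+1−a mod e} ∪ {κ₂ mod e, …, κ₂+1−b mod e} equals the corresponding multiset for (a′,b′) if and only if a ≡ a′ (mod e) or a + a′ ≡ d + κ₁ − κ₂ (mod e). -/
/-- The multiset of residues of a column of length `a` with charge `κ`: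
`{κ, κ-1, …, κ+1-a}` modulo `e`. -/
def colRes (e : ℕ) (κ : ℤ) (a : ℕ) : Multiset (ZMod e) :=
  (Multiset.range a).map fun r => ((κ - (r : ℤ)) : ZMod e)


lemma dmu {e q q' r r' : ℕ} (hr : r < e) (hr' : r' < e) (h : e*q + r = e*q' + r') :
    q = q' ∧ r = r' := by
  have h1 : (e*q + r) / e = q ∧ (e*q + r) % e = r :=
    (Nat.div_mod_unique (by omega)).mpr ⟨by ring, hr⟩
  have h2 : (e*q + r) / e = q' ∧ (e*q + r) % e = r' :=
    (Nat.div_mod_unique (by omega)).mpr ⟨by rw [h]; ring, hr'⟩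
  omega

lemma resrel {e S S' x x' : ℕ} (hx : x < 2*e) (hx' : x' < 2*e) (h : e*S + x = e*S' + x') :
    (S = S' ∧ x = x') ∨ (S' = S + 1 ∧ x = x' + e) ∨ (S = S' + 1 ∧ x + e = x') := by
  have he : 0 < e := by omega
  have h1 := Nat.div_add_mod x e
  have h1' := Nat.div_add_mod x' e
  have hm : x % e < e := Nat.mod_lt _ he
  have hm' : x' % e < e := Nat.mod_lt _ he
  have hk : x / e = 0 ∨ x / e = 1 := by
    have h2 : x / e < 2 := (Nat.div_lt_iff_lt_mul he).mpr (by omega)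
    generalize x / e = k at h2 ⊢
    omega
  have hk' : x' / e = 0 ∨ x' / e = 1 := by
    have h2 : x' / e < 2 := (Nat.div_lt_iff_lt_mul he).mpr (by omega)
    generalize x' / e = k at h2 ⊢
    omega
  rcases hk with hk | hk <;> rcases hk' with hk' | hk' <;>
    rw [hk] at h1 <;> rw [hk'] at h1' <;> simp at h1 h1'
  · have := dmu hm hm' (show e*S + x % e = e*S' + x' % e by omega)
    left; omega
  · have := dmu (q := S) (q' := S' + 1) hm hm'
      (by rw [Nat.mul_add, Nat.mul_one]; omega)
    right; right; omega
  · have := dmu (q := S + 1) (q' := S') hm hm'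
      (by rw [Nat.mul_add, Nat.mul_one]; omega)
    right; left; omega
  · have := dmu (q := S + 1) (q' := S' + 1) hm hm'
      (by rw [Nat.mul_add, Nat.mul_add, Nat.mul_one]; omega)
    left; omega

lemma modrep (e x : ℕ) (hx : x < 2*e) : x % e = x ∨ x % e + e = x := by
  have he : 0 < e := by omega
  rcases Nat.lt_or_ge x e with h | h
  · left; exact Nat.mod_eq_of_lt h
  · right
    rw [Nat.mod_eq_sub_mod h, Nat.mod_eq_of_lt (by omega)]
    omega

set_option maxHeartbeats 2000000 in
lemma core (e δ qa ra qb rb qa' ra' qb' rb' : ℕ) (hδ1 : 1 ≤ δ) (hδ2 : δ < e)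
    (hra : ra < e) (hrb : rb < e) (hra' : ra' < e) (hrb' : rb' < e)
    (hd : e*qa + ra + (e*qb + rb) = e*qa' + ra' + (e*qb' + rb')) :
    (∀ t < e, qa + qb + (if t < ra then 1 else 0) + (if (t+δ) % e < rb then 1 else 0)
      = qa' + qb' + (if t < ra' then 1 else 0) + (if (t+δ) % e < rb' then 1 else 0))
    ↔ (ra = ra' ∨ ra' + δ = rb ∨ ra' + δ = rb + e) := by
  have he : 0 < e := by omega
  have hd2 : e*(qa+qb) + (ra+rb) = e*(qa'+qb') + (ra'+rb') := by
    rw [Nat.mul_add, Nat.mul_add]; omega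
  have hrel := resrel (by omega) (by omega) hd2
  constructor
  · -- equality of counts ⇒ congruence
    intro H
    by_contra hcon
    push_neg at hcon
    obtain ⟨hc1, hc2, hc3⟩ := hcon
    -- choose s
    have hs : ∃ s, 1 ≤ s ∧ s < e ∧ (s = ra ∨ s = ra') := by
      rcases Nat.eq_zero_or_pos ra with h0 | h0
      · rcases Nat.eq_zero_or_pos ra' with h0' | h0'
        · exact absurd (h0.trans h0'.symm) hc1
        · exact ⟨ra', h0', hra', Or.inr rfl⟩
      · exact ⟨ra, h0, hra, Or.inl rfl⟩
    obtain ⟨s, hs1, hs2, hs3⟩ := hs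
    have h1 := H (s-1) (by omega)
    have h2 := H s hs2
    have hm1 := modrep e (s-1+δ) (by omega)
    have hm2 := modrep e (s+δ) (by omega)
    have hmlt1 : (s-1+δ) % e < e := Nat.mod_lt _ he
    have hmlt2 : (s+δ) % e < e := Nat.mod_lt _ he
    split_ifs at h1 h2 <;> omega
  · -- congruence ⇒ equality of counts
    intro hcong t ht
    have hm := modrep e (t+δ) (by omega)
    have hmlt : (t+δ) % e < e := Nat.mod_lt _ he
    rcases hcong with h | h
    · -- ra = ra'
      have : qa + qb = qa' + qb' ∧ rb = rb' := by
        rcases hrel with ⟨h1, h2⟩ | ⟨h1, h2⟩ | ⟨h1, h2⟩ <;> omega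
      split_ifs <;> omega
    · -- ra' + δ ≡ rb
      rcases hrel with ⟨h1, h2⟩ | ⟨h1, h2⟩ | ⟨h1, h2⟩ <;> split_ifs <;> omega

lemma countRange (e t : ℕ) (he : 0 < e) (ht : t < e) (a : ℕ) :
    Multiset.card ((Multiset.range a).filter (fun j => j % e = t))
      = a / e + if t < a % e then 1 else 0 := by
  induction a with
  | zero => simp
  | succ a ih =>
    rw [Multiset.range_succ, Multiset.filter_cons]
    have h1 := Nat.div_add_mod a e
    have h2 := Nat.div_add_mod (a+1) e
    have hm1 : a % e < e := Nat.mod_lt _ he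
    have hm2 : (a+1) % e < e := Nat.mod_lt _ he
    have hstep : ((a+1) / e = a / e ∧ (a+1) % e = a % e + 1) ∨
        (a % e + 1 = e ∧ (a+1) / e = a / e + 1 ∧ (a+1) % e = 0) := by
      rcases Nat.lt_or_ge (a % e + 1) e with h | h
      · left
        have := dmu (e := e) (q := (a+1)/e) (q' := a/e) hm2 h (by omega)
        omega
      · right
        refine ⟨by omega, ?_⟩
        have := dmu (e := e) (q := (a+1)/e) (q' := a/e + 1) hm2 he
          (by rw [Nat.mul_add, Nat.mul_one]; omega)
        omega
    clear h1 h2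
    by_cases hc : a % e = t
    · rw [if_pos hc, Multiset.card_add, Multiset.card_singleton, ih]
      rcases hstep with ⟨hs1, hs2⟩ | ⟨hs0, hs1, hs2⟩ <;> simp only [hs1, hs2] <;>
        split_ifs <;> omega
    · rw [if_neg hc, zero_add, ih]
      rcases hstep with ⟨hs1, hs2⟩ | ⟨hs0, hs1, hs2⟩ <;> simp only [hs1, hs2] <;>
        split_ifs <;> omega

lemma count_colRes (e : ℕ) [NeZero e] (κ : ℤ) (a : ℕ) (v : ZMod e) :
    Multiset.count v (colRes e κ a)
      = a / e + if ((κ : ZMod e) - v).val < a % e then 1 else 0 := by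
  have he : 0 < e := Nat.pos_of_ne_zero (NeZero.ne e)
  have hcol : colRes e κ a
      = (Multiset.range a).map (fun j : ℕ => (κ : ZMod e) - (j : ZMod e)) := by
    simp [colRes, Multiset.map_map]
  rw [hcol, Multiset.count_map]
  have hiff : ∀ j ∈ Multiset.range a,
      (v = (κ : ZMod e) - (j : ZMod e)) ↔ (j % e = ((κ : ZMod e) - v).val) := by
    intro j _
    constructor
    · intro h
      have hj : (j : ZMod e) = (κ : ZMod e) - v := by rw [h]; ring
      rw [← hj, ZMod.val_natCast]
    · intro h
      have hj : (j : ZMod e) = (κ : ZMod e) - v :=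
        ZMod.val_injective e (by rw [ZMod.val_natCast, h])
      rw [hj]; ring
  rw [Multiset.filter_congr hiff]
  exact countRange e _ he (ZMod.val_lt _) a

set_option maxHeartbeats 1000000 in
/-- Two one-column bipartitions `(a,b)` and `(a',b')` of `d` have the same multiset of
residues iff `a ≡ a' (mod e)` or `a + a' ≡ d + κ₁ − κ₂ (mod e)`. -/
theorem stmt4 (e : ℕ) (he : 2 ≤ e) (κ₁ κ₂ : ℤ) (hκ : 0 < κ₂ - κ₁) (hκe : κ₂ - κ₁ < (e : ℤ))
    (d a b a' b' : ℕ) (hab : a + b = d) (hab' : a' + b' = d) :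
    colRes e κ₁ a + colRes e κ₂ b = colRes e κ₁ a' + colRes e κ₂ b' ↔
      ((a : ℤ) ≡ (a' : ℤ) [ZMOD (e : ℤ)] ∨
        ((a : ℤ) + (a' : ℤ)) ≡ ((d : ℤ) + κ₁ - κ₂) [ZMOD (e : ℤ)]) := by

  haveI : NeZero e := ⟨by omega⟩
  have he0 : 0 < e := by omega
  set δ : ℕ := (κ₂ - κ₁).toNat with hδdef
  have hδint : (δ : ℤ) = κ₂ - κ₁ := Int.toNat_of_nonneg (le_of_lt hκ)
  have hδ1 : 1 ≤ δ := by omega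
  have hδ2 : δ < e := by omega
  have hval : ∀ v : ZMod e,
      ((κ₂ : ZMod e) - v).val = ((((κ₁ : ZMod e) - v).val) + δ) % e := by
    intro v
    have hκ2 : (κ₂ : ZMod e) = (κ₁ : ZMod e) + ((δ : ℕ) : ZMod e) := by
      have h : κ₂ = κ₁ + ((δ : ℕ) : ℤ) := by omega
      rw [h]; push_cast; ring
    have h2 : (κ₂ : ZMod e) - v = ((κ₁ : ZMod e) - v) + ((δ : ℕ) : ZMod e) := by
      rw [hκ2]; ring
    rw [h2, ZMod.val_add, ZMod.val_natCast, Nat.mod_eq_of_lt hδ2]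
  have hma : a % e < e := Nat.mod_lt _ he0
  have hmb : b % e < e := Nat.mod_lt _ he0
  have hma' : a' % e < e := Nat.mod_lt _ he0
  have hmb' : b' % e < e := Nat.mod_lt _ he0
  have key : (colRes e κ₁ a + colRes e κ₂ b = colRes e κ₁ a' + colRes e κ₂ b') ↔
      (∀ t < e, a/e + b/e + (if t < a % e then 1 else 0)
          + (if (t + δ) % e < b % e then 1 else 0)
        = a'/e + b'/e + (if t < a' % e then 1 else 0)
          + (if (t + δ) % e < b' % e then 1 else 0)) := by
    rw [Multiset.ext]
    constructor
    · intro h t ht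
      have h2 := h ((κ₁ : ZMod e) - ((t : ℕ) : ZMod e))
      simp only [Multiset.count_add, count_colRes, hval] at h2
      have hv : ((κ₁ : ZMod e) - ((κ₁ : ZMod e) - ((t : ℕ) : ZMod e))).val = t := by
        rw [show (κ₁ : ZMod e) - ((κ₁ : ZMod e) - ((t : ℕ) : ZMod e))
            = ((t : ℕ) : ZMod e) by ring, ZMod.val_natCast, Nat.mod_eq_of_lt ht]
      rw [hv] at h2
      omega
    · intro h v
      simp only [Multiset.count_add, count_colRes, hval]
      have h2 := h (((κ₁ : ZMod e) - v).val) (ZMod.val_lt _)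
      omega
  have hd : e*(a/e) + a % e + (e*(b/e) + b % e)
      = e*(a'/e) + a' % e + (e*(b'/e) + b' % e) := by
    rw [Nat.div_add_mod, Nat.div_add_mod, Nat.div_add_mod, Nat.div_add_mod, hab, hab']
  have hcore := core e δ (a/e) (a % e) (b/e) (b % e) (a'/e) (a' % e) (b'/e) (b' % e)
    hδ1 hδ2 hma hmb hma' hmb' hd
  have hcong1 : ((a : ℤ) ≡ (a' : ℤ) [ZMOD (e : ℤ)]) ↔ a % e = a' % e := by
    constructor
    · intro h
      have h2 : ((a % e : ℕ) : ℤ) = ((a' % e : ℕ) : ℤ) := by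
        rw [Int.natCast_mod, Int.natCast_mod]; exact h
      exact_mod_cast h2
    · intro h
      show (a : ℤ) % e = (a' : ℤ) % e
      rw [← Int.natCast_mod, ← Int.natCast_mod, h]
  have hcong2 : (((a : ℤ) + (a' : ℤ)) ≡ ((d : ℤ) + κ₁ - κ₂) [ZMOD (e : ℤ)]) ↔
      (a' % e + δ = b % e ∨ a' % e + δ = b % e + e) := by
    rw [Int.modEq_iff_dvd]
    have h1 : (b : ℤ) = (e : ℤ) * ((b/e : ℕ) : ℤ) + ((b % e : ℕ) : ℤ) := by
      exact_mod_cast (Nat.div_add_mod b e).symm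
    have h2 : (a' : ℤ) = (e : ℤ) * ((a'/e : ℕ) : ℤ) + ((a' % e : ℕ) : ℤ) := by
      exact_mod_cast (Nat.div_add_mod a' e).symm
    have hsplit : ((d : ℤ) + κ₁ - κ₂) - ((a : ℤ) + (a' : ℤ))
        = (e : ℤ) * (((b/e : ℕ) : ℤ) - ((a'/e : ℕ) : ℤ))
          + (((b % e : ℕ) : ℤ) - (δ : ℤ) - ((a' % e : ℕ) : ℤ)) := by
      rw [mul_sub]
      omega
    rw [hsplit, Int.dvd_add_right (dvd_mul_right _ _)]
    constructor
    · intro hdvd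
      obtain ⟨k, hk⟩ := hdvd
      have hk0 : k = 0 ∨ k = -1 := by
        by_contra hcon
        push_neg at hcon
        rcases lt_trichotomy k 0 with h | h | h
        · have hle : k ≤ -2 := by omega
          have : (e : ℤ) * k ≤ (e : ℤ) * (-2) :=
            mul_le_mul_of_nonneg_left hle (by omega)
          omega
        · omega
        · have hge : 1 ≤ k := by omega
          have : (e : ℤ) * 1 ≤ (e : ℤ) * k :=
            mul_le_mul_of_nonneg_left hge (by omega)
          omega
      rcases hk0 with rfl | rfl
      · left; omega
      · right; omega
    · intro h
      rcases h with h | h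
      · exact ⟨0, by omega⟩
      · exact ⟨-1, by omega⟩
  rw [key, hcore, hcong1, hcong2]
end

section
/- Let λ = ((1^a),(1^b)) be a one-column bipartition of d and let T be a non-standard λ-tableau (a bijective filling of the boxes by 1,…,d that is not increasing down some column). Then there exist a permutation w ∈ S_d and a Garnir tableau G of shape λ such that w_T = w · w_G and ℓ(w_T) = ℓ(w) + ℓ(w_G), where ℓ denotes Coxeter length. Conversely, if w_T = w · w_G with ℓ(w_T) = ℓ(w) + ℓ(w_G) for some Garnir tableau G, then T is non-standard. -/
/-- `y` is the box directly below `x` in the same column. -/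
def succBox {a b : ℕ} : Fin a ⊕ Fin b → Fin a ⊕ Fin b → Prop
  | Sum.inl i, Sum.inl j => (j : ℕ) = (i : ℕ) + 1
  | Sum.inr i, Sum.inr j => (j : ℕ) = (i : ℕ) + 1
  | _, _ => False

/-- The inversion number of a permutation of `Fin n` (its Coxeter length). -/
def invLen {n : ℕ} (w : Equiv.Perm (Fin n)) : ℕ :=
  (Finset.univ.filter fun q : Fin n × Fin n => q.1 < q.2 ∧ w q.2 < w q.1).card

/-- `G` is a Garnir tableau of shape `((1^a),(1^b))`: for some Garnir node `x` with
successor box `y`, setting `u = T^λ(x)`, `v = T^λ(y)`, either `v = u+1` and `G = s_u T^λ`,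
or `v = u+2` and `G = s_u s_{u+1} T^λ` or `G = s_{u+1} s_u T^λ`. -/
def IsGarnirTab (a b : ℕ) (G : Fin a ⊕ Fin b → Fin (a + b)) : Prop :=
  ∃ x y : Fin a ⊕ Fin b, succBox x y ∧
    (((initTab a b y : ℕ) = (initTab a b x : ℕ) + 1 ∧
        G = fun z => Equiv.swap (initTab a b x) (initTab a b y) (initTab a b z)) ∨
     ((initTab a b y : ℕ) = (initTab a b x : ℕ) + 2 ∧
        ∃ w : Fin (a + b), (w : ℕ) = (initTab a b x : ℕ) + 1 ∧
          (G = (fun z => Equiv.swap (initTab a b x) w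
                  (Equiv.swap w (initTab a b y) (initTab a b z))) ∨
           G = fun z => Equiv.swap w (initTab a b y)
                  (Equiv.swap (initTab a b x) w (initTab a b z)))))


section Aux

lemma split_card {n : ℕ} (w v : Equiv.Perm (Fin n)) :
    invLen (w * v) =
      (Finset.univ.filter fun q : Fin n × Fin n =>
        (q.1 < q.2 ∧ (w * v) q.2 < (w * v) q.1) ∧ v q.2 < v q.1).card +
      (Finset.univ.filter fun q : Fin n × Fin n =>
        (q.1 < q.2 ∧ (w * v) q.2 < (w * v) q.1) ∧ ¬ v q.2 < v q.1).card := by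
  classical
  unfold invLen
  have h0 := Finset.card_filter_add_card_filter_not
    (s := Finset.univ.filter fun q : Fin n × Fin n => q.1 < q.2 ∧ (w * v) q.2 < (w * v) q.1)
    (p := fun q => v q.2 < v q.1)
  rw [Finset.filter_filter, Finset.filter_filter] at h0
  exact h0.symm

lemma part2_le {n : ℕ} (w v : Equiv.Perm (Fin n)) :
    (Finset.univ.filter fun q : Fin n × Fin n =>
        (q.1 < q.2 ∧ (w * v) q.2 < (w * v) q.1) ∧ ¬ v q.2 < v q.1).card ≤ invLen w := by
  classical
  apply Finset.card_le_card_of_injOn (fun q => (v q.1, v q.2))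
  · intro q hq
    simp only [Finset.mem_coe, Finset.mem_filter, Finset.mem_univ, true_and] at hq ⊢
    obtain ⟨⟨h1, h2⟩, h3⟩ := hq
    refine ⟨lt_of_le_of_ne (not_lt.1 h3) fun e => (ne_of_lt h1) (v.injective e), ?_⟩
    simpa [Equiv.Perm.mul_apply] using h2
  · intro q _ r _ hqr
    have h1 : v q.1 = v r.1 := congrArg Prod.fst hqr
    have h2 : v q.2 = v r.2 := congrArg Prod.snd hqr
    exact Prod.ext (v.injective h1) (v.injective h2)

lemma invLen_add_of_subset {n : ℕ} (w v : Equiv.Perm (Fin n))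
    (h : ∀ i j : Fin n, i < j → v j < v i → (w * v) j < (w * v) i) :
    invLen (w * v) = invLen w + invLen v := by
  classical
  rw [split_card w v]
  have e1 : (Finset.univ.filter fun q : Fin n × Fin n =>
      (q.1 < q.2 ∧ (w * v) q.2 < (w * v) q.1) ∧ v q.2 < v q.1).card = invLen v := by
    unfold invLen
    congr 1
    apply Finset.filter_congr
    intro q _
    constructor
    · rintro ⟨⟨h1, _⟩, h3⟩; exact ⟨h1, h3⟩
    · rintro ⟨h1, h3⟩; exact ⟨⟨h1, h q.1 q.2 h1 h3⟩, h3⟩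
  have e2 : (Finset.univ.filter fun q : Fin n × Fin n =>
      (q.1 < q.2 ∧ (w * v) q.2 < (w * v) q.1) ∧ ¬ v q.2 < v q.1).card = invLen w := by
    unfold invLen
    apply Finset.card_bij' (fun q _ => (v q.1, v q.2)) (fun p _ => (v⁻¹ p.1, v⁻¹ p.2))
    · intro q hq
      simp only [Finset.mem_filter, Finset.mem_univ, true_and] at hq ⊢
      obtain ⟨⟨h1, h2⟩, h3⟩ := hq
      refine ⟨lt_of_le_of_ne (not_lt.1 h3) fun e => (ne_of_lt h1) (v.injective e), ?_⟩
      simpa [Equiv.Perm.mul_apply] using h2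
    · intro p hp
      simp only [Finset.mem_filter, Finset.mem_univ, true_and] at hp ⊢
      obtain ⟨h1, h2⟩ := hp
      have hne : v⁻¹ p.1 ≠ v⁻¹ p.2 := fun e => (ne_of_lt h1) (by
        have := congrArg v e; simpa using this)
      have hlt : v⁻¹ p.1 < v⁻¹ p.2 := by
        rcases lt_or_gt_of_ne hne with h' | h'
        · exact h'
        · exfalso
          have := h _ _ h' (by simp [Equiv.Perm.coe_inv, Equiv.apply_symm_apply, h1])
          simp only [Equiv.Perm.mul_apply, Equiv.Perm.coe_inv, Equiv.apply_symm_apply] at this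
          exact absurd h2 (not_lt.2 (le_of_lt this))
      refine ⟨⟨hlt, ?_⟩, ?_⟩
      · simpa [Equiv.Perm.mul_apply, Equiv.Perm.coe_inv, Equiv.apply_symm_apply] using h2
      · simp [Equiv.Perm.coe_inv, Equiv.apply_symm_apply, not_lt, le_of_lt h1]
    · intro q _; simp
    · intro p _; simp
  rw [e1, e2, Nat.add_comm]

lemma invLen_lt_of_absent {n : ℕ} (w v : Equiv.Perm (Fin n)) (i j : Fin n)
    (hij : i < j) (hv : v j < v i) (hw : ¬ (w * v) j < (w * v) i) :
    invLen (w * v) < invLen w + invLen v := by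
  classical
  rw [split_card w v]
  have e1 : (Finset.univ.filter fun q : Fin n × Fin n =>
      (q.1 < q.2 ∧ (w * v) q.2 < (w * v) q.1) ∧ v q.2 < v q.1).card < invLen v := by
    apply Finset.card_lt_card
    constructor
    · intro q hq
      simp only [Finset.mem_filter, Finset.mem_univ, true_and] at hq ⊢
      exact ⟨hq.1.1, hq.2⟩
    · intro hsub
      have := hsub (by simp only [Finset.mem_filter, Finset.mem_univ, true_and]
                       exact ⟨hij, hv⟩ : (i, j) ∈ _)
      simp only [Finset.mem_filter, Finset.mem_univ, true_and] at this
      exact hw this.1.2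
  have e2 := part2_le w v
  omega

lemma initTab_succ (a b : ℕ) (x y : Fin a ⊕ Fin b) (h : succBox x y) :
    (initTab a b y : ℕ) = (initTab a b x : ℕ) + 1 ∨
    (initTab a b y : ℕ) = (initTab a b x : ℕ) + 2 := by
  rcases x with i | i <;> rcases y with j | j <;> simp only [succBox] at h
  · have hi := i.isLt; have hj := j.isLt
    simp only [initTab]
    split_ifs <;> simp <;> omega
  · have hi := i.isLt; have hj := j.isLt
    simp only [initTab]
    split_ifs <;> simp <;> omega

lemma mono_of_consec {m n : ℕ} (f : Fin m → Fin n)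
    (h : ∀ (k : ℕ) (hk : k + 1 < m), f ⟨k, by omega⟩ < f ⟨k + 1, hk⟩) :
    ∀ i j : Fin m, i < j → f i < f j := by
  have key : ∀ t : ℕ, ∀ i j : Fin m, (j : ℕ) = (i : ℕ) + t + 1 → f i < f j := by
    intro t
    induction t with
    | zero =>
      intro i j hj
      have hk : (i : ℕ) + 1 < m := by have := j.isLt; omega
      have h1 := h (i : ℕ) hk
      have hi : (⟨(i : ℕ), by omega⟩ : Fin m) = i := Fin.ext rfl
      have hji : j = ⟨(i : ℕ) + 1, hk⟩ := Fin.ext (by simpa using hj)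
      rw [hi] at h1; rw [hji]; exact h1
    | succ t ih =>
      intro i j hj
      have hm : (i : ℕ) + t + 1 < m := by have := j.isLt; omega
      refine lt_trans (ih i ⟨(i : ℕ) + t + 1, hm⟩ rfl) ?_
      have hk : ((i : ℕ) + t + 1) + 1 < m := by have := j.isLt; omega
      have h1 := h ((i : ℕ) + t + 1) hk
      have hji : j = ⟨(i : ℕ) + t + 1 + 1, hk⟩ := Fin.ext (by simp; omega)
      rw [hji]; exact h1
  intro i j hij
  exact key ((j : ℕ) - (i : ℕ) - 1) i j (by have := Fin.lt_def.1 hij; omega)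

lemma dsA {n : ℕ} (u m v z : Fin n) (hm : (m : ℕ) = (u : ℕ) + 1) (hv : (v : ℕ) = (u : ℕ) + 2) :
    (Equiv.swap u m * Equiv.swap m v) z =
      if z = u then m else if z = m then v else if z = v then u else z := by
  have hum : u ≠ m := Fin.ne_of_val_ne (by omega)
  have huv : u ≠ v := Fin.ne_of_val_ne (by omega)
  have hmv : m ≠ v := Fin.ne_of_val_ne (by omega)
  rw [Equiv.Perm.mul_apply]
  split_ifs with h1 h2 h3
  · subst h1; rw [Equiv.swap_apply_of_ne_of_ne hum huv, Equiv.swap_apply_left]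
  · subst h2; rw [Equiv.swap_apply_left, Equiv.swap_apply_of_ne_of_ne huv.symm hmv.symm]
  · subst h3; rw [Equiv.swap_apply_right, Equiv.swap_apply_right]
  · rw [Equiv.swap_apply_of_ne_of_ne h2 h3, Equiv.swap_apply_of_ne_of_ne h1 h2]

lemma dsB {n : ℕ} (u m v z : Fin n) (hm : (m : ℕ) = (u : ℕ) + 1) (hv : (v : ℕ) = (u : ℕ) + 2) :
    (Equiv.swap m v * Equiv.swap u m) z =
      if z = u then v else if z = m then u else if z = v then m else z := by
  have hum : u ≠ m := Fin.ne_of_val_ne (by omega)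
  have huv : u ≠ v := Fin.ne_of_val_ne (by omega)
  have hmv : m ≠ v := Fin.ne_of_val_ne (by omega)
  rw [Equiv.Perm.mul_apply]
  split_ifs with h1 h2 h3
  · subst h1; rw [Equiv.swap_apply_left, Equiv.swap_apply_left]
  · subst h2; rw [Equiv.swap_apply_right, Equiv.swap_apply_of_ne_of_ne hum huv]
  · subst h3; rw [Equiv.swap_apply_of_ne_of_ne huv.symm hmv.symm, Equiv.swap_apply_right]
  · rw [Equiv.swap_apply_of_ne_of_ne h1 h2, Equiv.swap_apply_of_ne_of_ne h2 h3]

end Aux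

/-- A bijective filling `T` is non-standard iff `w_T` factors as `w · w_G` through some
Garnir tableau `G` with additivity of Coxeter lengths. -/
theorem stmt10 (a b : ℕ) (T : Fin a ⊕ Fin b → Fin (a + b)) (hT : Function.Bijective T)
    (wT : Equiv.Perm (Fin (a + b))) (hwT : ∀ x, wT (initTab a b x) = T x) :
    ¬ StdTab a b T ↔
      ∃ (G : Fin a ⊕ Fin b → Fin (a + b)) (wG w : Equiv.Perm (Fin (a + b))),
        IsGarnirTab a b G ∧ (∀ x, wG (initTab a b x) = G x) ∧
        wT = w * wG ∧ invLen wT = invLen w + invLen wG := by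
  constructor
  · intro hns
    have hviol : ∃ x y : Fin a ⊕ Fin b, succBox x y ∧ T y < T x := by
      by_contra hcon
      push_neg at hcon
      apply hns
      refine ⟨hT, ?_, ?_⟩
      · refine mono_of_consec (fun i => T (Sum.inl i)) (fun k hk => ?_)
        have h1 := hcon (Sum.inl ⟨k, by omega⟩) (Sum.inl ⟨k + 1, hk⟩) (by simp [succBox])
        refine lt_of_le_of_ne h1 fun e => ?_
        have := hT.injective e
        simp only [Sum.inl.injEq, Fin.mk.injEq] at this
        omega
      · refine mono_of_consec (fun i => T (Sum.inr i)) (fun k hk => ?_)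
        have h1 := hcon (Sum.inr ⟨k, by omega⟩) (Sum.inr ⟨k + 1, hk⟩) (by simp [succBox])
        refine lt_of_le_of_ne h1 fun e => ?_
        have := hT.injective e
        simp only [Sum.inr.injEq, Fin.mk.injEq] at this
        omega
    obtain ⟨x, y, hsb, hlt⟩ := hviol
    have hvu : wT (initTab a b y) < wT (initTab a b x) := by
      rw [hwT, hwT]; exact hlt
    rcases initTab_succ a b x y hsb with hv1 | hv2
    · refine ⟨fun z => Equiv.swap (initTab a b x) (initTab a b y) (initTab a b z),
        Equiv.swap (initTab a b x) (initTab a b y),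
        wT * (Equiv.swap (initTab a b x) (initTab a b y))⁻¹,
        ⟨x, y, hsb, Or.inl ⟨hv1, rfl⟩⟩, fun z => rfl,
        (inv_mul_cancel_right wT _).symm, ?_⟩
      have h := invLen_add_of_subset (wT * (Equiv.swap (initTab a b x) (initTab a b y))⁻¹)
        (Equiv.swap (initTab a b x) (initTab a b y)) ?_
      · rw [inv_mul_cancel_right] at h; omega
      · intro i j hij hinv
        rw [inv_mul_cancel_right]
        have hkey : i = initTab a b x ∧ j = initTab a b y := by
          rw [Equiv.swap_apply_def, Equiv.swap_apply_def] at hinv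
          split_ifs at hinv <;> simp only [Fin.ext_iff, Fin.lt_def] at * <;> omega
        rw [hkey.1, hkey.2]; exact hvu
    · have hbd : (initTab a b x : ℕ) + 1 < a + b := by
        have := (initTab a b y).isLt; omega
      have hmid : ((⟨(initTab a b x : ℕ) + 1, hbd⟩ : Fin (a + b)) : ℕ) =
          (initTab a b x : ℕ) + 1 := rfl
      by_cases hcm : wT (initTab a b y) < wT ⟨(initTab a b x : ℕ) + 1, hbd⟩
      · refine ⟨fun z => Equiv.swap (initTab a b x) ⟨(initTab a b x : ℕ) + 1, hbd⟩
            (Equiv.swap ⟨(initTab a b x : ℕ) + 1, hbd⟩ (initTab a b y) (initTab a b z)),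
          Equiv.swap (initTab a b x) ⟨(initTab a b x : ℕ) + 1, hbd⟩ *
            Equiv.swap ⟨(initTab a b x : ℕ) + 1, hbd⟩ (initTab a b y),
          wT * (Equiv.swap (initTab a b x) ⟨(initTab a b x : ℕ) + 1, hbd⟩ *
            Equiv.swap ⟨(initTab a b x : ℕ) + 1, hbd⟩ (initTab a b y))⁻¹,
          ⟨x, y, hsb, Or.inr ⟨hv2, ⟨(initTab a b x : ℕ) + 1, hbd⟩, rfl, Or.inl rfl⟩⟩,
          fun z => rfl, (inv_mul_cancel_right wT _).symm, ?_⟩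
        have h := invLen_add_of_subset
          (wT * (Equiv.swap (initTab a b x) ⟨(initTab a b x : ℕ) + 1, hbd⟩ *
            Equiv.swap ⟨(initTab a b x : ℕ) + 1, hbd⟩ (initTab a b y))⁻¹)
          (Equiv.swap (initTab a b x) ⟨(initTab a b x : ℕ) + 1, hbd⟩ *
            Equiv.swap ⟨(initTab a b x : ℕ) + 1, hbd⟩ (initTab a b y)) ?_
        · rw [inv_mul_cancel_right] at h; omega
        · intro i j hij hinv
          rw [inv_mul_cancel_right]
          have hkey : (i = initTab a b x ∨ i = ⟨(initTab a b x : ℕ) + 1, hbd⟩) ∧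
              j = initTab a b y := by
            rw [dsA (initTab a b x) ⟨(initTab a b x : ℕ) + 1, hbd⟩ (initTab a b y) j hmid hv2,
              dsA (initTab a b x) ⟨(initTab a b x : ℕ) + 1, hbd⟩ (initTab a b y) i hmid hv2]
              at hinv
            split_ifs at hinv <;> simp only [Fin.ext_iff, Fin.lt_def] at * <;> omega
          rcases hkey with ⟨hi | hi, hj⟩ <;> rw [hi, hj]
          · exact hvu
          · exact hcm
      · refine ⟨fun z => Equiv.swap ⟨(initTab a b x : ℕ) + 1, hbd⟩ (initTab a b y)
            (Equiv.swap (initTab a b x) ⟨(initTab a b x : ℕ) + 1, hbd⟩ (initTab a b z)),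
          Equiv.swap ⟨(initTab a b x : ℕ) + 1, hbd⟩ (initTab a b y) *
            Equiv.swap (initTab a b x) ⟨(initTab a b x : ℕ) + 1, hbd⟩,
          wT * (Equiv.swap ⟨(initTab a b x : ℕ) + 1, hbd⟩ (initTab a b y) *
            Equiv.swap (initTab a b x) ⟨(initTab a b x : ℕ) + 1, hbd⟩)⁻¹,
          ⟨x, y, hsb, Or.inr ⟨hv2, ⟨(initTab a b x : ℕ) + 1, hbd⟩, rfl, Or.inr rfl⟩⟩,
          fun z => rfl, (inv_mul_cancel_right wT _).symm, ?_⟩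
        have hmu : wT ⟨(initTab a b x : ℕ) + 1, hbd⟩ < wT (initTab a b x) :=
          lt_of_le_of_lt (not_lt.1 hcm) hvu
        have h := invLen_add_of_subset
          (wT * (Equiv.swap ⟨(initTab a b x : ℕ) + 1, hbd⟩ (initTab a b y) *
            Equiv.swap (initTab a b x) ⟨(initTab a b x : ℕ) + 1, hbd⟩)⁻¹)
          (Equiv.swap ⟨(initTab a b x : ℕ) + 1, hbd⟩ (initTab a b y) *
            Equiv.swap (initTab a b x) ⟨(initTab a b x : ℕ) + 1, hbd⟩) ?_
        · rw [inv_mul_cancel_right] at h; omega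
        · intro i j hij hinv
          rw [inv_mul_cancel_right]
          have hkey : i = initTab a b x ∧
              (j = ⟨(initTab a b x : ℕ) + 1, hbd⟩ ∨ j = initTab a b y) := by
            rw [dsB (initTab a b x) ⟨(initTab a b x : ℕ) + 1, hbd⟩ (initTab a b y) j hmid hv2,
              dsB (initTab a b x) ⟨(initTab a b x : ℕ) + 1, hbd⟩ (initTab a b y) i hmid hv2]
              at hinv
            split_ifs at hinv <;> simp only [Fin.ext_iff, Fin.lt_def] at * <;> omega
          rcases hkey with ⟨hi, hj | hj⟩ <;> rw [hi, hj]
          · exact hmu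
          · exact hvu
  · rintro ⟨G, wG, w, ⟨x, y, hsb, hcase⟩, hwG, hmul, hlen⟩ hstd
    have hTxy : T x < T y := by
      rcases x with i | i <;> rcases y with j | j <;> simp only [succBox] at hsb
      · exact hstd.2.1 i j (Fin.lt_def.2 (by omega))
      · exact hstd.2.2 i j (Fin.lt_def.2 (by omega))
    have huv : initTab a b x < initTab a b y := by
      rcases hcase with ⟨hv, _⟩ | ⟨hv, _⟩ <;> exact Fin.lt_def.2 (by omega)
    have hinv : wG (initTab a b y) < wG (initTab a b x) := by
      have hx := hwG x; have hy := hwG y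
      rcases hcase with ⟨hv, hG⟩ | ⟨hv, m', hm', hG | hG⟩
      · simp only [hG] at hx hy
        rw [Equiv.swap_apply_left] at hx
        rw [Equiv.swap_apply_right] at hy
        rw [hx, hy]
        exact Fin.lt_def.2 (by omega)
      · simp only [hG] at hx hy
        have hx' := dsA (initTab a b x) m' (initTab a b y) (initTab a b x) hm' hv
        rw [Equiv.Perm.mul_apply, if_pos rfl] at hx'
        have hy' := dsA (initTab a b x) m' (initTab a b y) (initTab a b y) hm' hv
        rw [Equiv.Perm.mul_apply, if_neg (Fin.ne_of_val_ne (by omega)),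
          if_neg (Fin.ne_of_val_ne (by omega)), if_pos rfl] at hy'
        rw [hx, hy, hx', hy']
        exact Fin.lt_def.2 (by omega)
      · simp only [hG] at hx hy
        have hx' := dsB (initTab a b x) m' (initTab a b y) (initTab a b x) hm' hv
        rw [Equiv.Perm.mul_apply, if_pos rfl] at hx'
        have hy' := dsB (initTab a b x) m' (initTab a b y) (initTab a b y) hm' hv
        rw [Equiv.Perm.mul_apply, if_neg (Fin.ne_of_val_ne (by omega)),
          if_neg (Fin.ne_of_val_ne (by omega)), if_pos rfl] at hy'
        rw [hx, hy, hx', hy']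
        exact Fin.lt_def.2 (by omega)
    have habs : ¬ (w * wG) (initTab a b y) < (w * wG) (initTab a b x) := by
      rw [← hmul, hwT, hwT]
      exact fun h => absurd hTxy (lt_asymm h)
    have hcontra := invLen_lt_of_absent w wG _ _ huv hinv habs
    rw [← hmul] at hcontra
    omega
end

section
/- Fix e ≥ 2 and a bicharge (κ₁,κ₂) with 0 < κ₂ − κ₁ < e. Call a lattice path p of length d length-increasing if |h(p(k+1))|' ≥ |h(p(k))|' for all k, where for a point v we set |v|' = |j| if v lies in alcove a_j and |v|' = |j − 1/2| if v lies on H_{j−1/2}. Then a path p ending at a one-column bipartition μ with ℓ(μ) = m < 0 is length-increasing if and only if p intersects each of the hyperplanes H_{−1/2}, H_{−3/2}, …, H_{m+1/2} at exactly one point and intersects none of the hyperplanes H_{1/2}, H_{m−1/2}, H_{m−3/2}, …. -/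
/-- The absolute length `|v|'` of a point: `|j - 1/2|` if `v` lies on the wall `H_{j-1/2}`
(i.e. `ht v = j·e`), and `|j|` if `v` lies in the alcove `a_j`. -/
noncomputable def lev (κ₁ κ₂ e : ℤ) (v : ℕ × ℕ) : ℚ :=
  if e ∣ ht κ₁ κ₂ v then |(Int.ediv (ht κ₁ κ₂ v) e : ℚ) - 1 / 2|
  else |(Int.ediv (ht κ₁ κ₂ v) e : ℚ)|

private lemma int_ivt_up (f : ℕ → ℤ) (c : ℤ) (a : ℕ) :
    ∀ b : ℕ, a ≤ b →
      (∀ k, a ≤ k → k < b → f (k + 1) = f k + 1 ∨ f (k + 1) = f k - 1) →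
      f a ≤ c → c ≤ f b → ∃ k, a ≤ k ∧ k ≤ b ∧ f k = c := by
  intro b
  induction b with
  | zero =>
    intro hab _ h1 h2
    have ha : a = 0 := by omega
    subst ha
    exact ⟨0, le_refl 0, le_refl 0, by omega⟩
  | succ b ih =>
    intro hab hstep h1 h2
    by_cases hab2 : a = b + 1
    · rw [hab2] at h1
      exact ⟨b + 1, by omega, le_refl _, by omega⟩
    · have hab' : a ≤ b := by omega
      by_cases hc : c ≤ f b
      · obtain ⟨k, hk1, hk2, hk3⟩ := ih hab' (fun k h1' h2' => hstep k h1' (by omega)) h1 hc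
        exact ⟨k, hk1, by omega, hk3⟩
      · have hs := hstep b hab' (by omega)
        exact ⟨b + 1, by omega, le_refl _, by omega⟩

private lemma int_ivt_down (f : ℕ → ℤ) (c : ℤ) (a b : ℕ) (hab : a ≤ b)
    (hstep : ∀ k, a ≤ k → k < b → f (k + 1) = f k + 1 ∨ f (k + 1) = f k - 1)
    (h1 : c ≤ f a) (h2 : f b ≤ c) : ∃ k, a ≤ k ∧ k ≤ b ∧ f k = c := by
  obtain ⟨k, hk1, hk2, hk3⟩ := int_ivt_up (fun k => -f k) (-c) a b hab
    (fun k h1' h2' => by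
      rcases hstep k h1' h2' with h | h
      · right; show -f (k+1) = -f k - 1; omega
      · left; show -f (k+1) = -f k + 1; omega)
    (show -f a ≤ -c by omega) (show -c ≤ -f b by omega)
  have hk3' : -f k = -c := hk3
  exact ⟨k, hk1, hk2, by omega⟩

private lemma lev_wall (κ₁ κ₂ : ℤ) {e : ℤ} (he : 0 < e) (v : ℕ × ℕ) (j : ℤ)
    (h : ht κ₁ κ₂ v = j * e) : lev κ₁ κ₂ e v = |(j : ℚ) - 1 / 2| := by
  have hd : e ∣ ht κ₁ κ₂ v := ⟨j, by rw [h]; ring⟩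
  rw [lev, if_pos hd, h]
  rw [show Int.ediv (j * e) e = j * e / e from rfl, Int.mul_ediv_cancel _ he.ne']

private lemma lev_alcove (κ₁ κ₂ : ℤ) {e : ℤ} (he : 0 < e) (v : ℕ × ℕ) (j : ℤ)
    (h1 : j * e < ht κ₁ κ₂ v) (h2 : ht κ₁ κ₂ v < (j + 1) * e) :
    lev κ₁ κ₂ e v = |(j : ℚ)| := by
  have hexp : (j + 1) * e = j * e + e := by ring
  have hnd : ¬ e ∣ ht κ₁ κ₂ v := by
    rintro ⟨n, hn⟩
    rw [hn] at h1 h2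
    have hj : j < n := lt_of_mul_lt_mul_right (by linarith) he.le
    have hj2 : n < j + 1 := lt_of_mul_lt_mul_right (by linarith) he.le
    omega
  have hq : Int.ediv (ht κ₁ κ₂ v) e = j := by
    have h3 : ht κ₁ κ₂ v = (ht κ₁ κ₂ v - j * e) + e * j := by ring
    show ht κ₁ κ₂ v / e = j
    rw [h3, Int.add_mul_ediv_left _ _ he.ne',
      Int.ediv_eq_zero_of_lt (by linarith) (by linarith), zero_add]
  rw [lev, if_neg hnd, hq]

private lemma ediv_step {e a b : ℤ} (he : 2 ≤ e) (hab : b = a + 1 ∨ b = a - 1)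
    (ha : ¬ e ∣ a) (hb : ¬ e ∣ b) : Int.ediv a e = Int.ediv b e := by
  have he0 : (0 : ℤ) < e := by omega
  have h1 := Int.mul_ediv_add_emod a e
  have h2 := Int.mul_ediv_add_emod b e
  have ha1 : 0 ≤ a % e := Int.emod_nonneg a he0.ne'
  have ha2 : a % e < e := Int.emod_lt_of_pos a he0
  have hb1 : 0 ≤ b % e := Int.emod_nonneg b he0.ne'
  have hb2 : b % e < e := Int.emod_lt_of_pos b he0
  have ha0 : a % e ≠ 0 := fun h => ha (Int.dvd_of_emod_eq_zero h)
  have hb0 : b % e ≠ 0 := fun h => hb (Int.dvd_of_emod_eq_zero h)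
  show a / e = b / e
  have key : e * (b / e) - e * (a / e) = a % e - b % e + (b - a) := by linarith
  have hmul : e * (b / e) - e * (a / e) = e * (b / e - a / e) := by ring
  have ha0' : 1 ≤ a % e := by omega
  have hb0' : 1 ≤ b % e := by omega
  by_contra hne
  have htr : 1 ≤ b / e - a / e ∨ b / e - a / e ≤ -1 := by omega
  rcases htr with h | h
  · have := mul_le_mul_of_nonneg_left h he0.le
    rcases hab with h' | h' <;> linarith
  · have := mul_le_mul_of_nonneg_left h he0.le
    rcases hab with h' | h' <;> linarith


/-- A path ending at `μ` with `ℓ(μ) = m < 0` is length-increasing iff it meets each wall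
`H_{j-1/2}`, `m < j ≤ 0`, exactly once and meets neither `H_{1/2}` nor any wall
`H_{j-1/2}` with `j ≤ m`. -/
theorem stmt16 (e : ℕ) (he : 2 ≤ e) (κ₁ κ₂ : ℤ) (hκ : 0 < κ₂ - κ₁) (hκe : κ₂ - κ₁ < (e : ℤ))
    (m : ℤ) (hm : m < 0) (d μ₁ μ₂ : ℕ) (hd : μ₁ + μ₂ = d)
    (hal : m * (e : ℤ) < ht κ₁ κ₂ (μ₁, μ₂)) (hal' : ht κ₁ κ₂ (μ₁, μ₂) < (m + 1) * (e : ℤ))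
    (p : ℕ → ℕ × ℕ) (hp : IsLatticePath d p) (hpd : p d = (μ₁, μ₂)) :
    (∀ k < d, lev κ₁ κ₂ (e : ℤ) (p k) ≤ lev κ₁ κ₂ (e : ℤ) (p (k + 1))) ↔
      ((∀ j : ℤ, m < j → j ≤ 0 → ∃! k, k ≤ d ∧ ht κ₁ κ₂ (p k) = j * (e : ℤ)) ∧
       (∀ k ≤ d, ht κ₁ κ₂ (p k) ≠ (e : ℤ)) ∧
       (∀ j : ℤ, j ≤ m → ∀ k ≤ d, ht κ₁ κ₂ (p k) ≠ j * (e : ℤ))) := by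
  have E0 : (0 : ℤ) < (e : ℤ) := by exact_mod_cast (by omega : 0 < e)
  have E2 : (2 : ℤ) ≤ (e : ℤ) := by exact_mod_cast he
  have hstep : ∀ k, k < d → ht κ₁ κ₂ (p (k + 1)) = ht κ₁ κ₂ (p k) + 1 ∨
      ht κ₁ κ₂ (p (k + 1)) = ht κ₁ κ₂ (p k) - 1 := by
    intro k hk
    rcases hp.2 k hk with h | h
    · left; rw [h]; simp [ht, Prod.fst_add, Prod.snd_add]; push_cast; ring
    · right; rw [h]; simp [ht, Prod.fst_add, Prod.snd_add]; push_cast; ring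
  have h0 : ht κ₁ κ₂ (p 0) = κ₂ - κ₁ := by rw [hp.1]; simp [ht]
  have hD1 : m * (e : ℤ) < ht κ₁ κ₂ (p d) := by rw [hpd]; exact hal
  have hD2 : ht κ₁ κ₂ (p d) < (m + 1) * (e : ℤ) := by rw [hpd]; exact hal'
  have hme : m * (e : ℤ) < 0 := mul_neg_of_neg_of_pos hm E0
  have hm1e : (m + 1) * (e : ℤ) ≤ 0 := mul_nonpos_of_nonpos_of_nonneg (by omega) E0.le
  constructor
  · intro hmono
    have hchain : ∀ k l, k ≤ l → l ≤ d →
        lev κ₁ κ₂ (e : ℤ) (p k) ≤ lev κ₁ κ₂ (e : ℤ) (p l) := by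
      intro k l hkl
      induction l, hkl using Nat.le_induction with
      | base => intro _; exact le_refl _
      | succ l hkl ih => intro hld; exact le_trans (ih (by omega)) (hmono l (by omega))
    have hnoE : ∀ k ≤ d, ht κ₁ κ₂ (p k) ≠ (e : ℤ) := by
      intro k hk hhit
      obtain ⟨k', hk1', hk2', hk3'⟩ := int_ivt_down (fun k => ht κ₁ κ₂ (p k)) ((e : ℤ) - 1) k d hk
        (fun k' ha hb => hstep k' (by omega))
        (show (e : ℤ) - 1 ≤ ht κ₁ κ₂ (p k) by omega)
        (show ht κ₁ κ₂ (p d) ≤ (e : ℤ) - 1 by linarith)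
      have hk3'' : ht κ₁ κ₂ (p k') = (e : ℤ) - 1 := hk3'
      have l1 : lev κ₁ κ₂ (e : ℤ) (p k) = |(1 : ℚ) - 1 / 2| := by
        have := lev_wall κ₁ κ₂ E0 (p k) 1 (by rw [hhit]; ring)
        rw [this]; norm_num
      have l2 : lev κ₁ κ₂ (e : ℤ) (p k') = |(0 : ℚ)| := by
        have := lev_alcove κ₁ κ₂ E0 (p k') 0 (by rw [hk3'']; linarith) (by rw [hk3'']; linarith)
        rw [this]; norm_num
      have := hchain k k' hk1' hk2'
      rw [l1, l2] at this
      norm_num at this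
    have hnoLow : ∀ j : ℤ, j ≤ m → ∀ k ≤ d, ht κ₁ κ₂ (p k) ≠ j * (e : ℤ) := by
      intro j hj k hk hhit
      have l1 : lev κ₁ κ₂ (e : ℤ) (p k) = |(j : ℚ) - 1 / 2| := lev_wall κ₁ κ₂ E0 (p k) j hhit
      have l2 : lev κ₁ κ₂ (e : ℤ) (p d) = |(m : ℚ)| := lev_alcove κ₁ κ₂ E0 (p d) m hD1 hD2
      have hc := hchain k d hk (le_refl d)
      rw [l1, l2] at hc
      have hjm : (j : ℚ) ≤ (m : ℚ) := by exact_mod_cast hj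
      have hm' : (m : ℚ) < 0 := by exact_mod_cast hm
      rw [abs_of_nonpos (by linarith), abs_of_nonpos (by linarith)] at hc
      linarith
    refine ⟨?_, hnoE, hnoLow⟩
    intro j hmj hj0
    have hje_le : j * (e : ℤ) ≤ 0 := mul_nonpos_of_nonpos_of_nonneg hj0 E0.le
    have hm1j : (m + 1) * (e : ℤ) ≤ j * (e : ℤ) := mul_le_mul_of_nonneg_right (by omega) E0.le
    have hj0' : (j : ℚ) ≤ 0 := by exact_mod_cast hj0
    obtain ⟨k₀, -, hk₀d, hk₀⟩ := int_ivt_down (fun k => ht κ₁ κ₂ (p k)) (j * (e : ℤ)) 0 d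
      (Nat.zero_le d) (fun k' ha hb => hstep k' (by omega))
      (show j * (e : ℤ) ≤ ht κ₁ κ₂ (p 0) by rw [h0]; linarith)
      (show ht κ₁ κ₂ (p d) ≤ j * (e : ℤ) by linarith)
    have hk₀' : ht κ₁ κ₂ (p k₀) = j * (e : ℤ) := hk₀
    have down : ∀ k, k < d → ht κ₁ κ₂ (p k) = j * (e : ℤ) →
        ht κ₁ κ₂ (p (k + 1)) = j * (e : ℤ) - 1 := by
      intro k hk hh
      rcases hstep k hk with h | h
      · exfalso
        have l1 : lev κ₁ κ₂ (e : ℤ) (p k) = |(j : ℚ) - 1 / 2| := lev_wall κ₁ κ₂ E0 (p k) j hh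
        have l2 : lev κ₁ κ₂ (e : ℤ) (p (k + 1)) = |(j : ℚ)| :=
          lev_alcove κ₁ κ₂ E0 (p (k + 1)) j (by rw [h, hh]; linarith) (by rw [h, hh]; linarith)
        have hmk := hmono k hk
        rw [l1, l2] at hmk
        rw [abs_of_nonpos (by linarith), abs_of_nonpos hj0'] at hmk
        linarith
      · rw [h, hh]
    have up : ∀ k, 0 < k → k ≤ d → ht κ₁ κ₂ (p k) = j * (e : ℤ) →
        ht κ₁ κ₂ (p (k - 1)) = j * (e : ℤ) + 1 := by
      intro k hk0 hkd hh
      have hk1 : k - 1 + 1 = k := by omega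
      have hs := hstep (k - 1) (by omega)
      rw [hk1] at hs
      rcases hs with h | h
      · exfalso
        have hprev : ht κ₁ κ₂ (p (k - 1)) = j * (e : ℤ) - 1 := by linarith
        have l1 : lev κ₁ κ₂ (e : ℤ) (p (k - 1)) = |((j - 1 : ℤ) : ℚ)| :=
          lev_alcove κ₁ κ₂ E0 (p (k - 1)) (j - 1) (by rw [hprev]; linarith)
            (by rw [hprev]; linarith)
        have l2 : lev κ₁ κ₂ (e : ℤ) (p k) = |(j : ℚ) - 1 / 2| := lev_wall κ₁ κ₂ E0 (p k) j hh
        have hmk := hmono (k - 1) (by omega)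
        rw [hk1, l1, l2] at hmk
        push_cast at hmk
        rw [abs_of_nonpos (by linarith), abs_of_nonpos (by linarith)] at hmk
        linarith
      · linarith
    have key : ∀ k₁ k₂, k₁ < k₂ → k₂ ≤ d → ht κ₁ κ₂ (p k₁) = j * (e : ℤ) →
        ht κ₁ κ₂ (p k₂) = j * (e : ℤ) → False := by
      intro k₁ k₂ h12 hk2d hh1 hh2
      have hfind : ∃ k, k₁ < k ∧ k ≤ d ∧ ht κ₁ κ₂ (p k) = j * (e : ℤ) := ⟨k₂, h12, hk2d, hh2⟩
      obtain ⟨hk₃1, hk₃2, hk₃3⟩ := Nat.find_spec hfind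
      have hd1 : ht κ₁ κ₂ (p (k₁ + 1)) = j * (e : ℤ) - 1 := down k₁ (by omega) hh1
      have hne : k₁ + 1 ≠ Nat.find hfind := by
        intro hEq; rw [← hEq] at hk₃3; linarith
      have h13 : k₁ + 1 < Nat.find hfind := by omega
      have hu1 : ht κ₁ κ₂ (p (Nat.find hfind - 1)) = j * (e : ℤ) + 1 :=
        up (Nat.find hfind) (by omega) hk₃2 hk₃3
      obtain ⟨k', h1', h2', h3'⟩ := int_ivt_up (fun k => ht κ₁ κ₂ (p k)) (j * (e : ℤ))
        (k₁ + 1) (Nat.find hfind - 1) (by omega) (fun k' ha hb => hstep k' (by omega))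
        (show ht κ₁ κ₂ (p (k₁ + 1)) ≤ j * (e : ℤ) by linarith)
        (show j * (e : ℤ) ≤ ht κ₁ κ₂ (p (Nat.find hfind - 1)) by linarith)
      have h3'' : ht κ₁ κ₂ (p k') = j * (e : ℤ) := h3'
      exact Nat.find_min hfind (show k' < Nat.find hfind by omega) ⟨by omega, by omega, h3''⟩
    refine ⟨k₀, ⟨hk₀d, hk₀'⟩, ?_⟩
    rintro y ⟨hyd, hy⟩
    rcases lt_trichotomy y k₀ with h | h | h
    · exact (key y k₀ h hk₀d hy hk₀').elim
    · exact h
    · exact (key k₀ y h hyd hk₀' hy).elim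
  · rintro ⟨hex, h1, h2⟩
    have hlt : ∀ k ≤ d, ht κ₁ κ₂ (p k) < (e : ℤ) := by
      intro k
      induction k with
      | zero => intro _; rw [h0]; linarith
      | succ k ih =>
        intro hk
        have ihk := ih (by omega)
        have hne := h1 (k + 1) hk
        rcases hstep k (by omega) with h | h <;> omega
    have hgt : ∀ k ≤ d, m * (e : ℤ) < ht κ₁ κ₂ (p k) := by
      intro k
      induction k with
      | zero => intro _; rw [h0]; linarith
      | succ k ih =>
        intro hk
        have ihk := ih (by omega)
        have ihk' : m * (e : ℤ) + 1 ≤ ht κ₁ κ₂ (p k) := Int.add_one_le_iff.mpr ihk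
        have hne := h2 m (le_refl m) (k + 1) hk
        rcases hstep k (by omega) with h | h
        · linarith
        · have hge : m * (e : ℤ) ≤ ht κ₁ κ₂ (p (k + 1)) := by linarith
          exact lt_of_le_of_ne hge (Ne.symm hne)
    have hC : ∀ k ≤ d, ((e : ℤ) ∣ ht κ₁ κ₂ (p k)) →
        ∃ j : ℤ, m < j ∧ j ≤ 0 ∧ ht κ₁ κ₂ (p k) = j * (e : ℤ) := by
      rintro k hk ⟨n, hn⟩
      refine ⟨n, ?_, ?_, by rw [hn]; ring⟩
      · have hg := hgt k hk
        rw [hn] at hg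
        exact lt_of_mul_lt_mul_right (by linarith) E0.le
      · have hl := hlt k hk
        rw [hn] at hl
        have : n < 1 := lt_of_mul_lt_mul_right (show n * (e : ℤ) < 1 * (e : ℤ) by linarith) E0.le
        omega
    have huniq : ∀ j : ℤ, m < j → j ≤ 0 → ∀ k₁ k₂, k₁ ≤ d → k₂ ≤ d →
        ht κ₁ κ₂ (p k₁) = j * (e : ℤ) → ht κ₁ κ₂ (p k₂) = j * (e : ℤ) → k₁ = k₂ := by
      intro j hj1 hj2 k₁ k₂ hk1 hk2 hh1 hh2
      obtain ⟨k, -, hkun⟩ := hex j hj1 hj2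
      rw [hkun k₁ ⟨hk1, hh1⟩, hkun k₂ ⟨hk2, hh2⟩]
    intro k hk
    by_cases hdv : (e : ℤ) ∣ ht κ₁ κ₂ (p k)
    · obtain ⟨j, hj1, hj2, hjh⟩ := hC k (by omega) hdv
      have hje_le : j * (e : ℤ) ≤ 0 := mul_nonpos_of_nonpos_of_nonneg hj2 E0.le
      have hm1j : (m + 1) * (e : ℤ) ≤ j * (e : ℤ) := mul_le_mul_of_nonneg_right (by omega) E0.le
      have hnext : ht κ₁ κ₂ (p (k + 1)) = j * (e : ℤ) - 1 := by
        rcases hstep k hk with h | h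
        · exfalso
          obtain ⟨k', h1', h2', h3'⟩ := int_ivt_down (fun k => ht κ₁ κ₂ (p k)) (j * (e : ℤ))
            (k + 1) d (by omega) (fun k' ha hb => hstep k' (by omega))
            (show j * (e : ℤ) ≤ ht κ₁ κ₂ (p (k + 1)) by linarith)
            (show ht κ₁ κ₂ (p d) ≤ j * (e : ℤ) by linarith)
          have h3'' : ht κ₁ κ₂ (p k') = j * (e : ℤ) := h3'
          have := huniq j hj1 hj2 k k' (by omega) h2' hjh h3''
          omega
        · linarith
      have l1 : lev κ₁ κ₂ (e : ℤ) (p k) = |(j : ℚ) - 1 / 2| := lev_wall κ₁ κ₂ E0 (p k) j hjh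
      have l2 : lev κ₁ κ₂ (e : ℤ) (p (k + 1)) = |(j : ℚ) - 1| := by
        have := lev_alcove κ₁ κ₂ E0 (p (k + 1)) (j - 1) (by rw [hnext]; linarith)
          (by rw [hnext]; linarith)
        rw [this]
        push_cast
        ring_nf
      rw [l1, l2]
      have hj0' : (j : ℚ) ≤ 0 := by exact_mod_cast hj2
      rw [abs_of_nonpos (by linarith), abs_of_nonpos (by linarith)]
      linarith
    · by_cases hdv' : (e : ℤ) ∣ ht κ₁ κ₂ (p (k + 1))
      · obtain ⟨j, hj1, hj2, hjh⟩ := hC (k + 1) (by omega) hdv'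
        have hje_le : j * (e : ℤ) ≤ 0 := mul_nonpos_of_nonpos_of_nonneg hj2 E0.le
        have hprev : ht κ₁ κ₂ (p k) = j * (e : ℤ) + 1 := by
          rcases hstep k hk with h | h
          · exfalso
            obtain ⟨k', h1', h2', h3'⟩ := int_ivt_down (fun k => ht κ₁ κ₂ (p k)) (j * (e : ℤ))
              0 k (Nat.zero_le k) (fun k' ha hb => hstep k' (by omega))
              (show j * (e : ℤ) ≤ ht κ₁ κ₂ (p 0) by rw [h0]; linarith)
              (show ht κ₁ κ₂ (p k) ≤ j * (e : ℤ) by linarith)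
            have h3'' : ht κ₁ κ₂ (p k') = j * (e : ℤ) := h3'
            have := huniq j hj1 hj2 k' (k + 1) (by omega) (by omega) h3'' hjh
            omega
          · linarith
        have l1 : lev κ₁ κ₂ (e : ℤ) (p k) = |(j : ℚ)| :=
          lev_alcove κ₁ κ₂ E0 (p k) j (by rw [hprev]; linarith) (by rw [hprev]; linarith)
        have l2 : lev κ₁ κ₂ (e : ℤ) (p (k + 1)) = |(j : ℚ) - 1 / 2| :=
          lev_wall κ₁ κ₂ E0 (p (k + 1)) j hjh
        rw [l1, l2]
        have hj0' : (j : ℚ) ≤ 0 := by exact_mod_cast hj2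
        rw [abs_of_nonpos (by linarith), abs_of_nonpos (by linarith)]
        linarith
      · have hed : Int.ediv (ht κ₁ κ₂ (p k)) (e : ℤ) = Int.ediv (ht κ₁ κ₂ (p (k + 1))) (e : ℤ) :=
          ediv_step E2 (hstep k hk) hdv hdv'
        simp only [lev, if_neg hdv, if_neg hdv', hed, le_refl]
end
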